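/- Let A, B > 0. There is a constant c (depending only on A, B) such that for all integers n ≥ 1 and all q ∈ (1/2, 1), one has (q^{A+n};q)_∞ / (q^{B+n};q)_∞ ≤ c · (1-q^n)^{B-A}. -/

import Mathlib

/-!
Write `f a = log (q ^ a; q)_∞ = ∑ₖ log (1 - q ^ (a + k))`. Each summand is concave in `a`,
hence so is `f`, and `f a - f (a + 1) = log (1 - q ^ a)`. Comparing the chord slope of `f` on
`[A + n, B + n]` with the slope on the adjacent unit interval bounds the ratio by
`(1 - q ^ (B + n)) ^ (B - A)` when `A ≤ B`, and by `(1 - q ^ (B + n - 1)) ^ (B - A)` when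
`B ≤ A`. Since `(1 - q ^ t) / t` decreases in `t`, both bases are comparable to `1 - q ^ n`
uniformly in `n ≥ 1`.
-/

/-- The infinite q-Pochhammer symbol `(x;q)_∞ = ∏_{k=0}^{∞} (1 - x q^k)`. -/
noncomputable def qPochInf (x q : ℝ) : ℝ :=
  ∏' k : ℕ, (1 - x * q ^ k)

open Real Set

lemma ConcaveOn.sub_mul_sub_le {𝕜 : Type*} [Field 𝕜] [LinearOrder 𝕜]
    [IsStrictOrderedRing 𝕜] {s : Set 𝕜} {f : 𝕜 → 𝕜} (hf : ConcaveOn 𝕜 s f) {x y z : 𝕜}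
    (hx : x ∈ s) (hz : z ∈ s) (hxy : x ≤ y) (hyz : y ≤ z) :
    (y - x) * (f z - f y) ≤ (z - y) * (f y - f x) := by
  rcases hxy.eq_or_lt with rfl | hxy
  · simp
  rcases hyz.eq_or_lt with rfl | hyz
  · simp
  have := hf.slope_anti_adjacent hx hz hxy hyz
  rwa [div_le_div_iff₀ (sub_pos.2 hyz) (sub_pos.2 hxy), mul_comm (f z - f y),
    mul_comm (f y - f x)] at this

section
variable {q : ℝ}

lemma concaveOn_one_sub_rpow (hq0 : 0 < q) : ConcaveOn ℝ univ (fun u : ℝ => 1 - q ^ u) :=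
  (concaveOn_const 1 convex_univ).sub (convexOn_rpow_left hq0)

lemma mul_one_sub_rpow_le_mul (hq0 : 0 < q) {s t : ℝ} (hs : 0 ≤ s) (hst : s ≤ t) :
    s * (1 - q ^ t) ≤ t * (1 - q ^ s) := by
  have := (concaveOn_one_sub_rpow hq0).sub_mul_sub_le trivial trivial hs hst
  simp only [rpow_zero, sub_self, sub_zero] at this
  linarith

lemma one_sub_rpow_add_le (hq0 : 0 < q) (hq1 : q ≤ 1) {b n : ℝ} (hb : 0 ≤ b) (hn : 1 ≤ n) :
    1 - q ^ (b + n) ≤ (b + 1) * (1 - q ^ n) := by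
  have hslope := mul_one_sub_rpow_le_mul hq0 (by linarith : 0 ≤ n) (by linarith : n ≤ b + n)
  have hqn : 0 ≤ 1 - q ^ n := sub_nonneg.2 (rpow_le_one hq0.le hq1 (by linarith))
  nlinarith [mul_nonneg (mul_nonneg hb (sub_nonneg.2 hn)) hqn]

lemma min_one_mul_one_sub_rpow_le (hq0 : 0 < q) (hq1 : q ≤ 1) {b n : ℝ} (hb : 0 < b)
    (hn : 1 ≤ n) : min b 1 * (1 - q ^ n) ≤ 1 - q ^ (b + n - 1) := by
  set μ := min b 1
  have hμ0 : 0 < μ := lt_min hb one_pos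
  have hμ1 : μ ≤ 1 := min_le_right b 1
  have hμb : μ ≤ b := min_le_left b 1
  have hslope := mul_one_sub_rpow_le_mul hq0 (by positivity : 0 ≤ μ * n)
    (by nlinarith : μ * n ≤ n)
  have hexp : μ * n ≤ b + n - 1 := by
    nlinarith [mul_nonneg (sub_nonneg.2 hμ1) (sub_nonneg.2 hn)]
  have hq_le := rpow_le_rpow_of_exponent_ge hq0 hq1 hexp
  nlinarith

lemma concaveOn_log_one_sub_rpow (hq0 : 0 < q) (hq1 : q < 1) :
    ConcaveOn ℝ (Ioi 0) (fun u : ℝ => log (1 - q ^ u)) := by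
  have hpos : ∀ u ∈ Ioi (0 : ℝ), 1 - q ^ u ∈ Ioi (0 : ℝ) := fun u hu =>
    sub_pos.2 (rpow_lt_one hq0.le hq1 hu)
  refine ⟨convex_Ioi 0, fun x hx y hy a b ha hb hab => ?_⟩
  calc a • log (1 - q ^ x) + b • log (1 - q ^ y)
      ≤ log (a • (1 - q ^ x) + b • (1 - q ^ y)) :=
        strictConcaveOn_log_Ioi.concaveOn.2 (hpos x hx) (hpos y hy) ha hb hab
    _ ≤ log (1 - q ^ (a • x + b • y)) :=
        log_le_log ((convex_Ioi 0) (hpos x hx) (hpos y hy) ha hb hab)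
          ((concaveOn_one_sub_rpow hq0).2 trivial trivial ha hb hab)

/-- `logQPochInf q a = log (q ^ a; q)_∞`. -/
noncomputable def logQPochInf (q a : ℝ) : ℝ := ∑' k : ℕ, log (1 - q ^ (a + k))

lemma summable_log_one_sub_rpow_add (hq0 : 0 < q) (hq1 : q < 1) (a : ℝ) :
    Summable (fun k : ℕ => log (1 - q ^ (a + k))) := by
  have := Real.summable_log_one_add_of_summable
    ((summable_geometric_of_lt_one hq0.le hq1).mul_left (q ^ a)).neg
  simpa only [rpow_add hq0, rpow_natCast, sub_eq_add_neg] using this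

lemma qPochInf_rpow (hq0 : 0 < q) (hq1 : q < 1) {a : ℝ} (ha : 0 < a) :
    qPochInf (q ^ a) q = exp (logQPochInf q a) := by
  have hpos (k : ℕ) : 0 < 1 - q ^ (a + k) := sub_pos.2 (rpow_lt_one hq0.le hq1 (by positivity))
  rw [logQPochInf, rexp_tsum_eq_tprod hpos (summable_log_one_sub_rpow_add hq0 hq1 a), qPochInf]
  simp only [rpow_add hq0, rpow_natCast]

lemma logQPochInf_eq_log_add (hq0 : 0 < q) (hq1 : q < 1) (a : ℝ) :
    logQPochInf q a = log (1 - q ^ a) + logQPochInf q (a + 1) := by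
  rw [logQPochInf, (summable_log_one_sub_rpow_add hq0 hq1 a).tsum_eq_zero_add, logQPochInf]
  simp only [Nat.cast_zero, add_zero, Nat.cast_succ, add_assoc, add_comm (1 : ℝ)]

lemma concaveOn_logQPochInf (hq0 : 0 < q) (hq1 : q < 1) :
    ConcaveOn ℝ (Ioi 0) (logQPochInf q) := by
  refine ⟨convex_Ioi 0, fun x hx y hy a b ha hb hab => ?_⟩
  have hsum := summable_log_one_sub_rpow_add hq0 hq1
  simp only [logQPochInf, smul_eq_mul, ← tsum_mul_left]
  rw [← ((hsum x).mul_left a).tsum_add ((hsum y).mul_left b)]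
  refine ((hsum x).mul_left a |>.add <| (hsum y).mul_left b).tsum_le_tsum (fun k => ?_) (hsum _)
  have hk : a * (x + k) + b * (y + k) = a * x + b * y + k := by
    linear_combination (k : ℝ) * hab
  have hxk : x + k ∈ Ioi 0 := mem_Ioi.2 (add_pos_of_pos_of_nonneg hx k.cast_nonneg)
  have hyk : y + k ∈ Ioi 0 := mem_Ioi.2 (add_pos_of_pos_of_nonneg hy k.cast_nonneg)
  simpa only [smul_eq_mul, hk] using (concaveOn_log_one_sub_rpow hq0 hq1).2 hxk hyk ha hb hab

lemma qPochInf_div_le_of_le (hq0 : 0 < q) (hq1 : q < 1) {a b : ℝ} (ha : 0 < a) (hab : a ≤ b) :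
    qPochInf (q ^ a) q / qPochInf (q ^ b) q ≤ (1 - q ^ b) ^ (b - a) := by
  have hb : 0 < b := ha.trans_le hab
  rw [qPochInf_rpow hq0 hq1 ha, qPochInf_rpow hq0 hq1 hb, ← exp_sub,
    rpow_def_of_pos (sub_pos.2 (rpow_lt_one hq0.le hq1 hb)), exp_le_exp]
  have hchord := (concaveOn_logQPochInf hq0 hq1).sub_mul_sub_le ha
    (show 0 < b + 1 by positivity) hab (le_add_of_nonneg_right zero_le_one)
  rw [logQPochInf_eq_log_add hq0 hq1 b] at hchord ⊢
  linarith

lemma qPochInf_div_le_of_ge (hq0 : 0 < q) (hq1 : q < 1) {a b : ℝ} (hb : 1 < b) (hba : b ≤ a) :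
    qPochInf (q ^ a) q / qPochInf (q ^ b) q ≤ (1 - q ^ (b - 1)) ^ (b - a) := by
  have hb1 : 0 < b - 1 := sub_pos.2 hb
  rw [qPochInf_rpow hq0 hq1 (by linarith), qPochInf_rpow hq0 hq1 (by linarith), ← exp_sub,
    rpow_def_of_pos (sub_pos.2 (rpow_lt_one hq0.le hq1 hb1)), exp_le_exp]
  have hchord := (concaveOn_logQPochInf hq0 hq1).sub_mul_sub_le hb1
    (show 0 < a by linarith) (sub_le_self b zero_le_one) hba
  rw [logQPochInf_eq_log_add hq0 hq1 (b - 1), sub_add_cancel] at hchord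
  linarith

end

/-- Uniform bound: for `A, B > 0` there is a constant `c` (depending only on `A, B`)
such that for all integers `n ≥ 1` and all `q ∈ (1/2, 1)`,
`(q^{A+n};q)_∞ / (q^{B+n};q)_∞ ≤ c (1-q^n)^{B-A}`. -/
theorem qPochInf_ratio_bound (A B : ℝ) (hA : 0 < A) (hB : 0 < B) :
    ∃ c : ℝ, ∀ n : ℕ, 1 ≤ n → ∀ q : ℝ, q ∈ Set.Ioo (1/2 : ℝ) 1 →
      qPochInf (q ^ (A + n)) q / qPochInf (q ^ (B + n)) q
        ≤ c * (1 - q ^ n) ^ (B - A) := by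
  suffices h : ∃ c > 0, ∀ n : ℝ, 1 ≤ n → ∀ q : ℝ, 0 < q → q < 1 →
      qPochInf (q ^ (A + n)) q / qPochInf (q ^ (B + n)) q ≤ (c * (1 - q ^ n)) ^ (B - A) by
    obtain ⟨c, hc, h⟩ := h
    refine ⟨c ^ (B - A), fun n hn q ⟨hq_half, hq1⟩ => ?_⟩
    have hq0 : 0 < q := by linarith
    have hqn : 0 ≤ 1 - q ^ (n : ℝ) := sub_nonneg.2 (rpow_le_one hq0.le hq1.le n.cast_nonneg)
    rw [← rpow_natCast q n, ← mul_rpow hc.le hqn]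
    exact h n (Nat.one_le_cast.2 hn) q hq0 hq1
  rcases le_total A B with hAB | hBA
  · refine ⟨B + 1, by positivity, fun n hn q hq0 hq1 => ?_⟩
    calc qPochInf (q ^ (A + n)) q / qPochInf (q ^ (B + n)) q
        ≤ (1 - q ^ (B + n)) ^ (B - A) := by
          simpa only [add_sub_add_right_eq_sub] using
            qPochInf_div_le_of_le hq0 hq1 (by positivity : 0 < A + n)
              (by linarith : A + n ≤ B + n)
      _ ≤ ((B + 1) * (1 - q ^ n)) ^ (B - A) :=
          rpow_le_rpow (sub_nonneg.2 (rpow_le_one hq0.le hq1.le (by positivity)))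
            (one_sub_rpow_add_le hq0 hq1.le hB.le hn) (sub_nonneg.2 hAB)
  · refine ⟨min B 1, lt_min hB one_pos, fun n hn q hq0 hq1 => ?_⟩
    calc qPochInf (q ^ (A + n)) q / qPochInf (q ^ (B + n)) q
        ≤ (1 - q ^ (B + n - 1)) ^ (B - A) := by
          simpa only [add_sub_add_right_eq_sub] using
            qPochInf_div_le_of_ge hq0 hq1 (by linarith : 1 < B + n)
              (by linarith : B + n ≤ A + n)
      _ ≤ (min B 1 * (1 - q ^ n)) ^ (B - A) :=
          rpow_le_rpow_of_nonpos
            (mul_pos (lt_min hB one_pos) (sub_pos.2 (rpow_lt_one hq0.le hq1 (by linarith))))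
            (min_one_mul_one_sub_rpow_le hq0 hq1.le hB hn) (sub_nonpos.2 hBA)
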